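/- arXiv:1607.00257 — 2 statements merged into one kernel-verified Lean document; each statement's English description precedes it below -/
import Mathlib

section
/- Let Γ be a connected graph with diameter two. Then sdim(Γ) = |V(Γ)| − ω(R_Γ), where R_Γ is the reduced graph of Γ and ω denotes clique number. -/
/-- Closed neighborhood of a vertex. -/
def SimpleGraph.closedNbhd {V : Type*} (Γ : SimpleGraph V) (x : V) : Set V :=
  insert x (Γ.neighborSet x)

/-- `z` strongly resolves `x` and `y`: some shortest path from `z` to `x` contains `y`,
or some shortest path from `z` to `y` contains `x`. -/
def SimpleGraph.StronglyResolves {V : Type*} (Γ : SimpleGraph V) (z x y : V) : Prop :=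
  Γ.dist z y + Γ.dist y x = Γ.dist z x ∨ Γ.dist z x + Γ.dist x y = Γ.dist z y

def SimpleGraph.IsStrongResolvingSet {V : Type*} (Γ : SimpleGraph V) (S : Set V) : Prop :=
  ∀ x y : V, x ≠ y → ∃ z ∈ S, Γ.StronglyResolves z x y

/-- Strong metric dimension. -/
noncomputable def SimpleGraph.sdim {V : Type*} (Γ : SimpleGraph V) : ℕ :=
  sInf {k | ∃ S : Set V, Γ.IsStrongResolvingSet S ∧ S.ncard = k}

/-- Equivalence: equal closed neighborhoods. -/
def SimpleGraph.nbhdSetoid {V : Type*} (Γ : SimpleGraph V) : Setoid V :=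
  ⟨fun x y => Γ.closedNbhd x = Γ.closedNbhd y,
   ⟨fun _ => rfl, Eq.symm, Eq.trans⟩⟩

/-- The reduced graph of `Γ`. -/
def SimpleGraph.reduced {V : Type*} (Γ : SimpleGraph V) :
    SimpleGraph (Quotient Γ.nbhdSetoid) where
  Adj a b := a ≠ b ∧ ∃ x y : V,
    Quotient.mk Γ.nbhdSetoid x = a ∧ Quotient.mk Γ.nbhdSetoid y = b ∧ Γ.Adj x y
  symm := by
    constructor
    rintro a b ⟨h, x, y, hx, hy, hxy⟩
    exact ⟨h.symm, y, x, hy, hx, hxy.symm⟩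
  loopless := by constructor; rintro a ⟨h, -⟩; exact h rfl

/-- The power graph of a group. -/
def powerGraph (G : Type*) [Group G] : SimpleGraph G where
  Adj x y := x ≠ y ∧ (x ∈ Subgroup.zpowers y ∨ y ∈ Subgroup.zpowers x)
  symm := by constructor; rintro x y ⟨h, h2⟩; exact ⟨h.symm, h2.symm⟩
  loopless := by constructor; rintro x ⟨h, -⟩; exact h rfl

/-- `σ n`: 1 if `n` is a prime power, otherwise the sum of the exponents in the
prime factorization of `n`. -/
noncomputable def sigmaExp (n : ℕ) : ℕ :=
  if IsPrimePow n then 1 else n.factorization.sum fun _ k => k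

/-- A maximal cyclic subgroup. -/
def IsMaxCyclic {G : Type*} [Group G] (M : Subgroup G) : Prop :=
  IsCyclic M ∧ ∀ N : Subgroup G, IsCyclic N → M ≤ N → M = N

/-- The set `𝓜_p` of maximal cyclic subgroups that are `p`-groups. -/
def maxCycP (p : ℕ) (G : Type*) [Group G] : Set (Subgroup G) :=
  {M | IsMaxCyclic M ∧ IsPGroup p M}

/-- The set of intersections of `M` with members of `𝓜_p`. -/
def inters (p : ℕ) {G : Type*} [Group G] (M : Subgroup G) : Set (Subgroup G) :=
  {C | ∃ N ∈ maxCycP p G, C = M ⊓ N}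

/-- `s_i`: the number of distinct intersections. -/
noncomputable def sNum (p : ℕ) {G : Type*} [Group G] (M : Subgroup G) : ℕ :=
  Nat.card (inters p M)

open Classical in
/-- `λ_i`, defined by `p ^ λ_i = max {|M ⊓ N| : N maximal cyclic, not a p-group}`
if maximal cyclic non-`p`-subgroups exist, and `λ_i = -1` otherwise. -/
noncomputable def lamInt (p : ℕ) {G : Type*} [Group G] (M : Subgroup G) : ℤ :=
  if {N : Subgroup G | IsMaxCyclic N ∧ ¬ IsPGroup p N}.Nonempty then
    (padicValNat p (sSup {k | ∃ N : Subgroup G, IsMaxCyclic N ∧ ¬ IsPGroup p N ∧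
        k = Nat.card ↥(M ⊓ N)}) : ℤ)
  else -1

/-- `s_i'`: the least index `u` with `p ^ λ_i < |C_{iu}|` in the chain of intersections;
equivalently one more than the number of intersections of cardinality at most `p ^ λ_i`. -/
noncomputable def sPrimeNum (p : ℕ) {G : Type*} [Group G] (M : Subgroup G) : ℕ :=
  Nat.card {C | C ∈ inters p M ∧ (Nat.card ↥C : ℚ) ≤ (p : ℚ) ^ (lamInt p M)} + 1

noncomputable def alphaTerm (p : ℕ) {G : Type*} [Group G] (M : Subgroup G) : ℤ :=
  (sNum p M : ℤ) - (sPrimeNum p M : ℤ) + lamInt p M + 2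

/-- `α_p = max_i (s_i - s_i' + λ_i + 2)`, with `α_p = 0` when `𝓜_p = ∅`. -/
noncomputable def alphaP (p : ℕ) (G : Type*) [Group G] : ℤ :=
  sSup (alphaTerm p '' maxCycP p G)

/-- A CP-group: every nonidentity element has prime power order. -/
def IsCPGroup (G : Type*) [Group G] : Prop :=
  ∀ g : G, g ≠ 1 → IsPrimePow (orderOf g)

/-!
In a graph of diameter at most two all distances are `0`, `1` or `2`, so a vertex `z ∉ {x, y}`
strongly resolves `x ≠ y` exactly when `x ~ y` and `z` lies in one of `N[x]`, `N[y]` but not in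
the other. Hence `S` is a strong resolving set iff its complement is a clique whose vertices have
pairwise distinct closed neighbourhoods, and such cliques are the lifts of the cliques of the
reduced graph.
-/

namespace SimpleGraph

variable {V : Type*} {Γ : SimpleGraph V} {x y z : V}

lemma mem_closedNbhd_iff : y ∈ Γ.closedNbhd x ↔ y = x ∨ Γ.Adj x y := by
  simp [closedNbhd]

lemma mem_closedNbhd_comm : x ∈ Γ.closedNbhd y ↔ y ∈ Γ.closedNbhd x := by
  simp only [mem_closedNbhd_iff, eq_comm, adj_comm]

lemma mem_closedNbhd_iff_adj (h : y ≠ x) : y ∈ Γ.closedNbhd x ↔ Γ.Adj x y := by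
  simp [mem_closedNbhd_iff, h]

lemma stronglyResolves_self_left : Γ.StronglyResolves x x y :=
  Or.inr (by rw [dist_self, zero_add])

lemma stronglyResolves_self_right : Γ.StronglyResolves y x y :=
  Or.inl (by rw [dist_self, zero_add])

lemma mk_eq_mk_iff_closedNbhd_eq :
    Quotient.mk Γ.nbhdSetoid x = Quotient.mk Γ.nbhdSetoid y ↔
      Γ.closedNbhd x = Γ.closedNbhd y :=
  Quotient.eq

lemma reduced_adj_mk_iff :
    Γ.reduced.Adj (Quotient.mk Γ.nbhdSetoid x) (Quotient.mk Γ.nbhdSetoid y) ↔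
      Γ.closedNbhd x ≠ Γ.closedNbhd y ∧ Γ.Adj x y := by
  simp only [reduced, ne_eq, mk_eq_mk_iff_closedNbhd_eq]
  refine ⟨fun ⟨hne, a, b, ha, hb, hab⟩ => ⟨hne, ?_⟩, fun ⟨hne, hxy⟩ => ⟨hne, x, y, rfl, rfl, hxy⟩⟩
  have hy : y ∈ Γ.closedNbhd x := by
    rw [← ha, ← mem_closedNbhd_comm, ← hb]
    exact (mem_closedNbhd_iff_adj hab.ne).2 hab.symm
  exact (mem_closedNbhd_iff_adj fun h => hne (congrArg _ h.symm)).1 hy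

lemma IsClique.ncard_le_cliqueNum {α : Type*} [Finite α] {G : SimpleGraph α} {s : Set α}
    (h : G.IsClique s) : s.ncard ≤ G.cliqueNum := by
  rw [Set.ncard_eq_toFinset_card s]
  exact IsClique.card_le_cliqueNum (tc := by simpa using h)

lemma IsClique.ncard_le_cliqueNum_reduced [Finite V] {W : Set V} (hW : Γ.IsClique W)
    (hinj : W.InjOn Γ.closedNbhd) : W.ncard ≤ Γ.reduced.cliqueNum := by
  have hmk : W.InjOn (Quotient.mk Γ.nbhdSetoid) := fun a ha b hb hab =>
    hinj ha hb (mk_eq_mk_iff_closedNbhd_eq.1 hab)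
  rw [← hmk.ncard_image]
  refine IsClique.ncard_le_cliqueNum ?_
  rintro _ ⟨a, ha, rfl⟩ _ ⟨b, hb, rfl⟩ hne
  have hab : a ≠ b := fun h => hne (h ▸ rfl)
  exact reduced_adj_mk_iff.2 ⟨hinj.ne ha hb hab, hW ha hb hab⟩

lemma exists_isClique_injOn_ncard_eq_cliqueNum_reduced :
    ∃ W : Set V, Γ.IsClique W ∧ W.InjOn Γ.closedNbhd ∧ W.ncard = Γ.reduced.cliqueNum := by
  obtain ⟨s, hs⟩ := Γ.reduced.exists_isNClique_cliqueNum
  refine ⟨Quotient.out '' (↑s : Set (Quotient Γ.nbhdSetoid)), ?_, ?_, ?_⟩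
  · rintro _ ⟨a, ha, rfl⟩ _ ⟨b, hb, rfl⟩ hne
    have hadj := hs.isClique ha hb fun h => hne (h ▸ rfl)
    rw [← Quotient.out_eq a, ← Quotient.out_eq b, reduced_adj_mk_iff] at hadj
    exact hadj.2
  · rintro _ ⟨a, -, rfl⟩ _ ⟨b, -, rfl⟩ hab
    rw [← Quotient.out_eq a, ← Quotient.out_eq b, mk_eq_mk_iff_closedNbhd_eq.2 hab]
  · rw [Set.ncard_image_of_injective _ Quotient.out_injective, Set.ncard_coe_finset, hs.card_eq]

lemma cliqueNum_reduced_le_card [Finite V] : Γ.reduced.cliqueNum ≤ Nat.card V := by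
  obtain ⟨W, -, -, hW⟩ := Γ.exists_isClique_injOn_ncard_eq_cliqueNum_reduced
  exact hW ▸ W.ncard_le_card

section DiamLeTwo

variable (h : Γ.ediam ≤ 2)
include h

open Classical in
lemma dist_eq_of_ediam_le_two (u v : V) :
    Γ.dist u v = if u = v then 0 else if Γ.Adj u v then 1 else 2 := by
  have hr : Γ.Reachable u v := preconnected_of_ediam_ne_top (ne_top_of_le_ne_top (by decide) h) u v
  split_ifs with huv hadj
  · exact huv ▸ dist_self
  · exact dist_eq_one_iff_adj.2 hadj
  · have hle : Γ.dist u v ≤ 2 := by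
      exact_mod_cast hr.coe_dist_eq_edist ▸ edist_le_ediam.trans h
    have := hr.one_lt_dist_of_ne_of_not_adj huv hadj
    omega

lemma stronglyResolves_iff_of_ne (hzx : z ≠ x) (hzy : z ≠ y) (hxy : x ≠ y) :
    Γ.StronglyResolves z x y ↔
      Γ.Adj x y ∧ ¬(z ∈ Γ.closedNbhd x ↔ z ∈ Γ.closedNbhd y) := by
  rw [StronglyResolves, mem_closedNbhd_iff_adj hzx, mem_closedNbhd_iff_adj hzy,
    Γ.dist_comm (u := y) (v := x), Γ.dist_comm (u := z) (v := x), Γ.dist_comm (u := z) (v := y)]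
  simp only [dist_eq_of_ediam_le_two h, hzx.symm, hzy.symm, hxy, if_false]
  by_cases Γ.Adj x z <;> by_cases Γ.Adj y z <;> by_cases Γ.Adj x y <;> simp [*]

lemma isStrongResolvingSet_iff {S : Set V} :
    Γ.IsStrongResolvingSet S ↔ Γ.IsClique Sᶜ ∧ Sᶜ.InjOn Γ.closedNbhd := by
  constructor
  · intro hS
    have hsep : ∀ x ∈ Sᶜ, ∀ y ∈ Sᶜ, x ≠ y →
        Γ.Adj x y ∧ ∃ z, ¬(z ∈ Γ.closedNbhd x ↔ z ∈ Γ.closedNbhd y) := by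
      intro x hx y hy hxy
      obtain ⟨z, hzS, hz⟩ := hS x y hxy
      have hzx : z ≠ x := fun hzx => hx (hzx ▸ hzS)
      have hzy : z ≠ y := fun hzy => hy (hzy ▸ hzS)
      obtain ⟨hadj, hz⟩ := (stronglyResolves_iff_of_ne h hzx hzy hxy).1 hz
      exact ⟨hadj, z, hz⟩
    refine ⟨fun x hx y hy hxy => (hsep x hx y hy hxy).1, fun x hx y hy hN => ?_⟩
    by_contra hxy
    obtain ⟨z, hz⟩ := (hsep x hx y hy hxy).2
    exact hz (by rw [hN])
  · rintro ⟨hcl, hinj⟩ x y hxy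
    by_cases hx : x ∈ S
    · exact ⟨x, hx, stronglyResolves_self_left⟩
    by_cases hy : y ∈ S
    · exact ⟨y, hy, stronglyResolves_self_right⟩
    obtain ⟨z, hz⟩ : ∃ z, ¬(z ∈ Γ.closedNbhd x ↔ z ∈ Γ.closedNbhd y) := by
      by_contra! hN
      exact hxy (hinj hx hy (Set.ext hN))
    -- every vertex of the clique `Sᶜ` lies in both `N[x]` and `N[y]`, so `z` does not
    have hzS : z ∈ S := by
      by_contra hzS
      have hmem : ∀ w ∈ Sᶜ, z ∈ Γ.closedNbhd w := fun w hw => by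
        by_cases hzw : z = w
        · exact mem_closedNbhd_iff.2 (Or.inl hzw)
        · exact mem_closedNbhd_iff.2 (Or.inr (hcl hw hzS (Ne.symm hzw)))
      exact hz ⟨fun _ => hmem y hy, fun _ => hmem x hx⟩
    have hzx : z ≠ x := fun hzx => hx (hzx ▸ hzS)
    have hzy : z ≠ y := fun hzy => hy (hzy ▸ hzS)
    exact ⟨z, hzS, (stronglyResolves_iff_of_ne h hzx hzy hxy).2 ⟨hcl hx hy hxy, hz⟩⟩

lemma sdim_eq_card_sub_cliqueNum_reduced [Finite V] :
    Γ.sdim = Nat.card V - Γ.reduced.cliqueNum := by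
  refine IsLeast.csInf_eq ⟨?_, ?_⟩
  · obtain ⟨W, hW, hinj, hcard⟩ := Γ.exists_isClique_injOn_ncard_eq_cliqueNum_reduced
    refine ⟨Wᶜ, (isStrongResolvingSet_iff h).2 ⟨?_, ?_⟩, ?_⟩
    · rwa [compl_compl]
    · rwa [compl_compl]
    · rw [Set.ncard_compl, hcard]
  · rintro _ ⟨S, hS, rfl⟩
    obtain ⟨hcl, hinj⟩ := (isStrongResolvingSet_iff h).1 hS
    have hle := hcl.ncard_le_cliqueNum_reduced hinj
    have hsum := S.ncard_add_ncard_compl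
    omega

end DiamLeTwo

end SimpleGraph

theorem stmt_1_general {V : Type*} [Fintype V] (Γ : SimpleGraph V)
    (hdiam : Γ.diam = 2) :
    (Γ.sdim : ℤ) = (Fintype.card V : ℤ) - (Γ.reduced.cliqueNum : ℤ) := by
  have hediam : Γ.ediam = 2 := by
    rw [← ENat.natCast_toNat (Γ.ediam_ne_top_of_diam_ne_zero (hdiam ▸ two_ne_zero))]
    exact congrArg _ hdiam
  rw [Γ.sdim_eq_card_sub_cliqueNum_reduced hediam.le, Nat.cast_sub Γ.cliqueNum_reduced_le_card,
    Nat.card_eq_fintype_card]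

theorem stmt_1 {V : Type*} [Fintype V] (Γ : SimpleGraph V)
    (hconn : Γ.Connected) (hdiam : Γ.diam = 2) :
    (Γ.sdim : ℤ) = (Fintype.card V : ℤ) - (Γ.reduced.cliqueNum : ℤ) :=
  stmt_1_general Γ hdiam
end

section
/- Let G be a noncyclic finite CP-group (every element has prime power order) of order n. Then ω(R_G) = max{α_p : p prime dividing n}, where R_G is the reduced graph of the power graph of G. -/
/-!
In a CP-group every cyclic subgroup is a `p`-group, so two elements of a common cyclic subgroup
are powers of one another. Hence the closed neighbourhood of `x` in the power graph is the union
of the maximal cyclic subgroups containing `x`, and `x`, `y` become one vertex of `R_G` exactly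
when they lie in the same maximal cyclic subgroups. The representatives of a clique of `R_G` are
pairwise powers of one another, so they all lie in one maximal cyclic subgroup `M`, and `ω(R_G)`
is the largest number of classes meeting a maximal cyclic subgroup.

For a maximal cyclic `p`-subgroup `M`, a nonidentity `x ∈ M` lies in exactly those `N ∈ 𝓜_p`
that contain the first member of the chain of intersections `M ⊓ N` containing `x`. So the
classes in `M \ {1}` correspond to the nontrivial intersections, and the identity adds one more
class unless it shares the class of a generator of the bottom of the chain, which happens iff
that bottom is nontrivial and every maximal cyclic subgroup is a `p`-group. Since `λ` is `0` or
`-1` according as some maximal cyclic subgroup is not a `p`-group, this count is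
`s - s' + λ + 2`.
-/

open Subgroup

theorem Set.ncard_image_eq_ncard_image_of_iff {α β γ : Type*} {f : α → β} {g : α → γ}
    {s : Set α} (h : ∀ x ∈ s, ∀ y ∈ s, f x = f y ↔ g x = g y) :
    (f '' s).ncard = (g '' s).ncard := by
  classical
  rcases s.eq_empty_or_nonempty with rfl | ⟨a, -⟩
  · simp
  have : Nonempty α := ⟨a⟩
  set F : β → γ := g ∘ Function.invFunOn f s
  have hF : ∀ x ∈ s, F (f x) = g x := fun x hx =>
    (h _ (Function.invFunOn_mem ⟨x, hx, rfl⟩) x hx).mp (Function.invFunOn_eq ⟨x, hx, rfl⟩)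
  have himage : g '' s = F '' (f '' s) := by
    rw [Set.image_image]
    exact Set.image_congr fun x hx => (hF x hx).symm
  rw [himage]
  refine (Set.InjOn.ncard_image ?_).symm
  rintro _ ⟨x, hx, rfl⟩ _ ⟨y, hy, rfl⟩ hxy
  rw [hF x hx, hF y hy] at hxy
  exact (h x hx y hy).mpr hxy

theorem IsChain.exists_isLeast {α : Type*} [PartialOrder α] {s : Set α}
    (hc : IsChain (· ≤ ·) s) (hs : s.Finite) (hne : s.Nonempty) : ∃ a, IsLeast s a := by
  obtain ⟨a, ha⟩ := hs.exists_minimal hne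
  refine ⟨a, ha.prop, fun b hb => ?_⟩
  rcases hc.total ha.prop hb with h | h
  · exact h
  · exact ha.le_of_le hb h

theorem IsCyclic.mem_zpowers_of_orderOf_dvd {H : Type*} [Group H] [Finite H] [IsCyclic H]
    {x y : H} (h : orderOf x ∣ orderOf y) : x ∈ zpowers y := by
  classical
  cases nonempty_fintype H
  -- `zpowers y` already has `orderOf y` elements killed by `orderOf y`,
  -- the most a cyclic group allows
  have hsub : (zpowers y : Set H).toFinset ⊆ Finset.univ.filter (· ^ orderOf y = 1) := by
    intro a ha
    simpa [orderOf_dvd_iff_pow_eq_one] using orderOf_dvd_of_mem_zpowers (Set.mem_toFinset.mp ha)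
  have heq := Finset.eq_of_subset_of_card_le hsub (by
    rw [← Nat.card_eq_card_toFinset, SetLike.coe_sort_coe, Nat.card_zpowers]
    exact IsCyclic.card_pow_eq_one_le (orderOf_pos y))
  have hx : x ∈ Finset.univ.filter (· ^ orderOf y = 1) := by
    simpa [orderOf_dvd_iff_pow_eq_one] using h
  rw [← heq, Set.mem_toFinset] at hx
  exact hx

theorem IsCyclic.mem_zpowers_or_mem_zpowers_of_isPGroup {H : Type*} [Group H] [Finite H]
    [IsCyclic H] {p : ℕ} (hp : p.Prime) (h : IsPGroup p H) (x y : H) :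
    x ∈ zpowers y ∨ y ∈ zpowers x := by
  have : Fact p.Prime := ⟨hp⟩
  obtain ⟨a, ha⟩ := IsPGroup.iff_orderOf.mp h x
  obtain ⟨b, hb⟩ := IsPGroup.iff_orderOf.mp h y
  rcases le_total a b with hab | hab
  · exact Or.inl (mem_zpowers_of_orderOf_dvd (ha ▸ hb ▸ pow_dvd_pow p hab))
  · exact Or.inr (mem_zpowers_of_orderOf_dvd (ha ▸ hb ▸ pow_dvd_pow p hab))

theorem IsPGroup.eq_of_ne_bot {G : Type*} [Group G] {p q : ℕ} (hp : p.Prime) (hq : q.Prime)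
    {K : Subgroup G} (hKp : IsPGroup p K) (hKq : IsPGroup q K) (hK : K ≠ ⊥) : p = q := by
  by_contra hpq
  exact hK (disjoint_self.mp (hKp.disjoint_of_coprime hKq ((Nat.coprime_primes hp hq).mpr hpq)))

section MaxCyclic

variable {G : Type*} [Group G]

theorem isMaxCyclic_iff_maximal {M : Subgroup G} :
    IsMaxCyclic M ↔ Maximal (fun N : Subgroup G => IsCyclic N) M :=
  ⟨fun h => ⟨h.1, fun N hN hle => (h.2 N hN hle).ge⟩,
    fun h => ⟨h.1, fun _ hN hle => le_antisymm hle (h.2 hN hle)⟩⟩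

theorem IsMaxCyclic.ne_bot [Nontrivial G] {M : Subgroup G} (hM : IsMaxCyclic M) : M ≠ ⊥ := by
  rintro rfl
  obtain ⟨g, hg⟩ := exists_ne (1 : G)
  exact hg (zpowers_eq_bot.mp (hM.2 _ (isCyclic_zpowers g) bot_le).symm)

variable [Finite G]

theorem exists_isMaxCyclic_le {H : Subgroup G} (hH : IsCyclic H) :
    ∃ M, IsMaxCyclic M ∧ H ≤ M := by
  obtain ⟨M, hHM, hM⟩ := Finite.exists_le_maximal (p := fun N : Subgroup G => IsCyclic N) hH
  exact ⟨M, isMaxCyclic_iff_maximal.mpr hM, hHM⟩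

theorem exists_isMaxCyclic_mem (x : G) : ∃ M, IsMaxCyclic M ∧ x ∈ M := by
  obtain ⟨M, hM, hle⟩ := exists_isMaxCyclic_le (isCyclic_zpowers x)
  exact ⟨M, hM, hle (mem_zpowers x)⟩

end MaxCyclic

section CPGroup

variable {G : Type*} [Group G]

theorem IsCPGroup.exists_isPGroup_of_isCyclic (hcp : IsCPGroup G) {H : Subgroup G}
    (hH : IsCyclic H) : ∃ p, p.Prime ∧ IsPGroup p H := by
  obtain ⟨g, rfl⟩ := H.isCyclic_iff_exists_zpowers_eq_top.mp hH
  by_cases hg : g = 1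
  · exact ⟨2, Nat.prime_two, by rw [hg, zpowers_one_eq_bot]; exact IsPGroup.of_bot⟩
  · obtain ⟨p, k, hp, -, hpk⟩ := hcp g hg
    exact ⟨p, Nat.prime_iff.mpr hp, IsPGroup.of_card (by rw [Nat.card_zpowers, hpk])⟩

theorem IsCPGroup.isPGroup_of_inf_ne_bot (hcp : IsCPGroup G) {p : ℕ} (hp : p.Prime)
    {M N : Subgroup G} (hM : IsPGroup p M) (hN : IsCyclic N) (h : M ⊓ N ≠ ⊥) :
    IsPGroup p N := by
  obtain ⟨q, hq, hNq⟩ := hcp.exists_isPGroup_of_isCyclic hN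
  rwa [IsPGroup.eq_of_ne_bot hp hq hM.to_inf_left hNq.to_inf_right h]

variable [Finite G]

theorem IsCPGroup.mem_zpowers_or_mem_zpowers (hcp : IsCPGroup G) {H : Subgroup G}
    (hH : IsCyclic H) {x y : G} (hx : x ∈ H) (hy : y ∈ H) :
    x ∈ zpowers y ∨ y ∈ zpowers x := by
  obtain ⟨p, hp, hHp⟩ := hcp.exists_isPGroup_of_isCyclic hH
  have key : ∀ {a b : H}, a ∈ zpowers b → (a : G) ∈ zpowers (b : G) := fun h => by
    simpa [MonoidHom.map_zpowers] using mem_map_of_mem H.subtype h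
  exact (IsCyclic.mem_zpowers_or_mem_zpowers_of_isPGroup hp hHp ⟨x, hx⟩ ⟨y, hy⟩).imp key key

theorem IsCPGroup.le_total_of_le (hcp : IsCPGroup G) {H : Subgroup G} (hH : IsCyclic H)
    {C D : Subgroup G} (hC : C ≤ H) (hD : D ≤ H) : C ≤ D ∨ D ≤ C := by
  by_contra! hCD
  obtain ⟨x, hxC, hxD⟩ := SetLike.not_le_iff_exists.mp hCD.1
  obtain ⟨y, hyD, hyC⟩ := SetLike.not_le_iff_exists.mp hCD.2
  rcases hcp.mem_zpowers_or_mem_zpowers hH (hC hxC) (hD hyD) with h | h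
  · exact hxD (zpowers_le.mpr hyD h)
  · exact hyC (zpowers_le.mpr hxC h)

end CPGroup

section PowerGraph

variable {G : Type*} [Group G] [Finite G]

def maxCyclicsContaining (x : G) : Set (Subgroup G) := {N | IsMaxCyclic N ∧ x ∈ N}

theorem exists_isMaxCyclic_mem_mem_of_adj {x y : G} (h : (powerGraph G).Adj x y) :
    ∃ N, IsMaxCyclic N ∧ x ∈ N ∧ y ∈ N := by
  rcases h.2 with h | h
  · obtain ⟨N, hN, hyN⟩ := exists_isMaxCyclic_mem y
    exact ⟨N, hN, zpowers_le.mpr hyN h, hyN⟩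
  · obtain ⟨N, hN, hxN⟩ := exists_isMaxCyclic_mem x
    exact ⟨N, hN, hxN, zpowers_le.mpr hxN h⟩

theorem IsCPGroup.mem_closedNbhd_powerGraph_iff (hcp : IsCPGroup G) {x y : G} :
    y ∈ (powerGraph G).closedNbhd x ↔ ∃ N ∈ maxCyclicsContaining x, y ∈ N := by
  constructor
  · rintro (rfl | hadj)
    · obtain ⟨N, hN, hyN⟩ := exists_isMaxCyclic_mem y
      exact ⟨N, ⟨hN, hyN⟩, hyN⟩
    · obtain ⟨N, hN, hxN, hyN⟩ := exists_isMaxCyclic_mem_mem_of_adj hadj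
      exact ⟨N, ⟨hN, hxN⟩, hyN⟩
  · rintro ⟨N, ⟨hN, hxN⟩, hyN⟩
    by_cases hyx : y = x
    · exact Or.inl hyx
    · exact Or.inr ⟨Ne.symm hyx, hcp.mem_zpowers_or_mem_zpowers hN.1 hxN hyN⟩

theorem IsCPGroup.closedNbhd_powerGraph_eq_iff (hcp : IsCPGroup G) {x y : G} :
    (powerGraph G).closedNbhd x = (powerGraph G).closedNbhd y ↔
      maxCyclicsContaining x = maxCyclicsContaining y := by
  refine ⟨fun h => ?_, fun h => Set.ext fun z => by
    rw [hcp.mem_closedNbhd_powerGraph_iff, hcp.mem_closedNbhd_powerGraph_iff, h]⟩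
  -- a maximal cyclic subgroup is the only maximal cyclic subgroup containing its generator
  have key : ∀ {a b : G}, (powerGraph G).closedNbhd a = (powerGraph G).closedNbhd b →
      maxCyclicsContaining a ⊆ maxCyclicsContaining b := by
    rintro a b hab N ⟨hN, haN⟩
    obtain ⟨g, rfl⟩ := N.isCyclic_iff_exists_zpowers_eq_top.mp hN.1
    have hg : g ∈ (powerGraph G).closedNbhd b :=
      hab ▸ hcp.mem_closedNbhd_powerGraph_iff.mpr ⟨_, ⟨hN, haN⟩, mem_zpowers g⟩
    obtain ⟨N', hN', hgN'⟩ := hcp.mem_closedNbhd_powerGraph_iff.mp hg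
    rw [hN.2 N' hN'.1.1 (zpowers_le.mpr hgN')]
    exact hN'
  exact (key h).antisymm (key h.symm)

theorem IsCPGroup.exists_isMaxCyclic_mem_mem_of_reduced_adj (hcp : IsCPGroup G) {x y : G}
    (h : (powerGraph G).reduced.Adj (Quotient.mk _ x) (Quotient.mk _ y)) :
    ∃ N, IsMaxCyclic N ∧ x ∈ N ∧ y ∈ N := by
  obtain ⟨-, x', y', hx', hy', hadj⟩ := h
  obtain ⟨N, hN, hx'N, hy'N⟩ := exists_isMaxCyclic_mem_mem_of_adj hadj
  have hxN : N ∈ maxCyclicsContaining x :=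
    hcp.closedNbhd_powerGraph_eq_iff.mp (Quotient.exact hx') ▸ ⟨hN, hx'N⟩
  have hyN : N ∈ maxCyclicsContaining y :=
    hcp.closedNbhd_powerGraph_eq_iff.mp (Quotient.exact hy') ▸ ⟨hN, hy'N⟩
  exact ⟨N, hN, hxN.2, hyN.2⟩

noncomputable def numClassesIn (M : Subgroup G) : ℕ :=
  (Quotient.mk (powerGraph G).nbhdSetoid '' (M : Set G)).ncard

theorem IsCPGroup.numClassesIn_eq_ncard_image (hcp : IsCPGroup G) (M : Subgroup G) :
    numClassesIn M = (maxCyclicsContaining '' (M : Set G)).ncard :=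
  Set.ncard_image_eq_ncard_image_of_iff fun _ _ _ _ =>
    Quotient.eq.trans hcp.closedNbhd_powerGraph_eq_iff

theorem IsCPGroup.isClique_image_mk (hcp : IsCPGroup G) {M : Subgroup G} (hM : IsMaxCyclic M) :
    (powerGraph G).reduced.IsClique (Quotient.mk _ '' (M : Set G)) := by
  rintro _ ⟨x, hx, rfl⟩ _ ⟨y, hy, rfl⟩ hne
  exact ⟨hne, x, y, rfl, rfl, fun hxy => hne (hxy ▸ rfl),
    hcp.mem_zpowers_or_mem_zpowers hM.1 hx hy⟩

theorem IsCPGroup.numClassesIn_le_cliqueNum (hcp : IsCPGroup G) {M : Subgroup G}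
    (hM : IsMaxCyclic M) : numClassesIn M ≤ (powerGraph G).reduced.cliqueNum := by
  rw [numClassesIn, Set.ncard_eq_toFinset_card _ (Set.toFinite _)]
  exact SimpleGraph.IsClique.card_le_cliqueNum
    (tc := by simpa using hcp.isClique_image_mk hM)

theorem IsCPGroup.exists_isMaxCyclic_subset_image_mk (hcp : IsCPGroup G)
    {s : Set (Quotient (powerGraph G).nbhdSetoid)} (hs : (powerGraph G).reduced.IsClique s) :
    ∃ M : Subgroup G, IsMaxCyclic M ∧ s ⊆ Quotient.mk _ '' (M : Set G) := by
  rcases s.eq_empty_or_nonempty with rfl | hne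
  · obtain ⟨M, hM, -⟩ := exists_isMaxCyclic_mem (1 : G)
    exact ⟨M, hM, Set.empty_subset _⟩
  -- representatives of a clique are pairwise powers of each other, so all of them are powers
  -- of the one generating the largest cyclic subgroup
  obtain ⟨a₀, ha₀, hmax⟩ :=
    s.exists_max_image (fun a => Nat.card (zpowers a.out)) s.toFinite hne
  obtain ⟨M, hM, hle⟩ := exists_isMaxCyclic_le (isCyclic_zpowers a₀.out)
  refine ⟨M, hM, fun a ha => ⟨a.out, hle ?_, a.out_eq⟩⟩
  by_cases haa₀ : a = a₀
  · rw [haa₀]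
    exact mem_zpowers _
  have hadj := hs ha ha₀ haa₀
  rw [← a.out_eq, ← a₀.out_eq] at hadj
  obtain ⟨N, hN, haN, ha₀N⟩ := hcp.exists_isMaxCyclic_mem_mem_of_reduced_adj hadj
  rcases hcp.mem_zpowers_or_mem_zpowers hN.1 haN ha₀N with h | h
  · exact h
  · rw [eq_of_le_of_card_ge (zpowers_le.mpr h) (hmax a ha)]
    exact mem_zpowers _

theorem IsCPGroup.exists_cliqueNum_eq_numClassesIn (hcp : IsCPGroup G) :
    ∃ M : Subgroup G, IsMaxCyclic M ∧ (powerGraph G).reduced.cliqueNum = numClassesIn M := by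
  obtain ⟨s, hs⟩ := (powerGraph G).reduced.exists_isNClique_cliqueNum
  obtain ⟨M, hM, hsM⟩ := hcp.exists_isMaxCyclic_subset_image_mk hs.isClique
  refine ⟨M, hM, le_antisymm ?_ (hcp.numClassesIn_le_cliqueNum hM)⟩
  calc (powerGraph G).reduced.cliqueNum = (s : Set _).ncard := by
        rw [Set.ncard_coe_finset, hs.card_eq]
    _ ≤ numClassesIn M := Set.ncard_le_ncard hsM (Set.toFinite _)

end PowerGraph

section Intersections

variable {G : Type*} [Group G] {p : ℕ} {M : Subgroup G}

theorem le_of_mem_inters {C : Subgroup G} (hC : C ∈ inters p M) : C ≤ M := by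
  obtain ⟨N, -, rfl⟩ := hC
  exact inf_le_left

theorem self_mem_inters (hM : M ∈ maxCycP p G) : M ∈ inters p M :=
  ⟨M, hM, inf_idem M |>.symm⟩

theorem le_of_setOf_le_subset {C D : Subgroup G} (hC : C ∈ inters p M) (hD : D ≤ M)
    (h : {N | N ∈ maxCycP p G ∧ C ≤ N} ⊆ {N | N ∈ maxCycP p G ∧ D ≤ N}) :
    D ≤ C := by
  obtain ⟨N, hN, rfl⟩ := hC
  exact le_inf hD (h ⟨hN, inf_le_right⟩).2

/-- The condition `𝓜_p ⊊ 𝓜` of the paper. -/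
def ExistsMaxCyclicNotPGroup (p : ℕ) (G : Type*) [Group G] : Prop :=
  {N : Subgroup G | IsMaxCyclic N ∧ ¬ IsPGroup p N}.Nonempty

theorem maxCyclicsContaining_one : maxCyclicsContaining (1 : G) = {N | IsMaxCyclic N} := by
  simp [maxCyclicsContaining, one_mem]

open Classical in
theorem IsCPGroup.lamInt_eq (hcp : IsCPGroup G) (hp : p.Prime) (hM : IsPGroup p M) :
    lamInt p M = if ExistsMaxCyclicNotPGroup p G then 0 else -1 := by
  unfold lamInt ExistsMaxCyclicNotPGroup
  split_ifs with hQ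
  · have hcards : {k | ∃ N : Subgroup G, IsMaxCyclic N ∧ ¬ IsPGroup p N ∧
        k = Nat.card ↥(M ⊓ N)} = {1} := by
      have htriv : ∀ N : Subgroup G, IsMaxCyclic N → ¬ IsPGroup p N →
          Nat.card ↥(M ⊓ N) = 1 := fun N hN hNp =>
        card_eq_one.mpr (not_not.mp (mt (hcp.isPGroup_of_inf_ne_bot hp hM hN.1) hNp))
      ext k
      refine ⟨fun ⟨N, hN, hNp, hk⟩ => hk.trans (htriv N hN hNp), fun hk => ?_⟩
      obtain ⟨N, hN, hNp⟩ := hQ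
      exact ⟨N, hN, hNp, hk.trans (htriv N hN hNp).symm⟩
    rw [hcards, csSup_singleton, padicValNat_one_right, Nat.cast_zero]
  · rfl

variable [Finite G]

theorem IsCPGroup.isChain_inters (hcp : IsCPGroup G) (hM : IsMaxCyclic M) :
    IsChain (· ≤ ·) (inters p M) := fun _ hC _ hD _ =>
  hcp.le_total_of_le hM.1 (le_of_mem_inters hC) (le_of_mem_inters hD)

/-- The first member of the chain `C_{i1} ⊊ ⋯ ⊊ C_{is_i}` of the paper that contains `x`. -/
noncomputable def minInters (p : ℕ) (M : Subgroup G) (x : G) : Subgroup G :=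
  sInf {C | C ∈ inters p M ∧ x ∈ C}

theorem IsCPGroup.isLeast_minInters (hcp : IsCPGroup G) (hM : M ∈ maxCycP p G) {x : G}
    (hx : x ∈ M) : IsLeast {C | C ∈ inters p M ∧ x ∈ C} (minInters p M x) := by
  have hchain := (hcp.isChain_inters hM.1).mono (Set.sep_subset (inters p M) (x ∈ ·))
  obtain ⟨C, hC⟩ := hchain.exists_isLeast (Set.toFinite _) ⟨M, self_mem_inters hM, hx⟩
  rwa [minInters, hC.csInf_eq]

theorem IsCPGroup.minInters_eq_zpowers (hcp : IsCPGroup G) (hM : M ∈ maxCycP p G) {g : G}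
    (hg : zpowers g ∈ inters p M) : minInters p M g = zpowers g := by
  have hleast := hcp.isLeast_minInters hM (le_of_mem_inters hg (mem_zpowers g))
  exact le_antisymm (hleast.2 ⟨hg, mem_zpowers g⟩) (zpowers_le.mpr hleast.1.2)

theorem IsCPGroup.maxCyclicsContaining_eq (hcp : IsCPGroup G) (hp : p.Prime)
    (hM : M ∈ maxCycP p G) {x : G} (hx : x ∈ M) (hx1 : x ≠ 1) :
    maxCyclicsContaining x = {N | N ∈ maxCycP p G ∧ minInters p M x ≤ N} := by
  have hleast := hcp.isLeast_minInters hM hx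
  ext N
  constructor
  · rintro ⟨hN, hxN⟩
    have hMN : M ⊓ N ≠ ⊥ := fun h => hx1 (mem_bot.mp (h ▸ mem_inf.mpr ⟨hx, hxN⟩))
    have hNp : N ∈ maxCycP p G := ⟨hN, hcp.isPGroup_of_inf_ne_bot hp hM.2 hN.1 hMN⟩
    exact ⟨hNp, (hleast.2 ⟨⟨N, hNp, rfl⟩, hx, hxN⟩).trans inf_le_right⟩
  · rintro ⟨hNp, hle⟩
    exact ⟨hNp.1, hle hleast.1.2⟩

theorem IsCPGroup.image_minInters_diff_one (hcp : IsCPGroup G) (hM : M ∈ maxCycP p G) :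
    minInters p M '' ((M : Set G) \ {1}) = inters p M \ {⊥} := by
  apply Set.Subset.antisymm
  · rintro _ ⟨x, ⟨hx, hx1⟩, rfl⟩
    have hleast := hcp.isLeast_minInters hM hx
    refine ⟨hleast.1.1, fun h => hx1 ?_⟩
    simpa [show minInters p M x = ⊥ from h] using hleast.1.2
  · rintro C ⟨hC, hCbot⟩
    have : IsCyclic M := hM.1.1
    obtain ⟨g, rfl⟩ := C.isCyclic_iff_exists_zpowers_eq_top.mp
      (isCyclic_of_le (le_of_mem_inters hC))
    have hg1 : g ≠ 1 := fun h => hCbot (by simp [h])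
    exact ⟨g, ⟨le_of_mem_inters hC (mem_zpowers g), hg1⟩, hcp.minInters_eq_zpowers hM hC⟩

theorem IsCPGroup.ncard_image_maxCyclicsContaining_diff_one (hcp : IsCPGroup G) (hp : p.Prime)
    (hM : M ∈ maxCycP p G) :
    (maxCyclicsContaining '' ((M : Set G) \ {1})).ncard = (inters p M \ {⊥}).ncard := by
  rw [← hcp.image_minInters_diff_one hM]
  refine Set.ncard_image_eq_ncard_image_of_iff fun x ⟨hx, hx1⟩ y ⟨hy, hy1⟩ => ?_
  rw [hcp.maxCyclicsContaining_eq hp hM hx hx1, hcp.maxCyclicsContaining_eq hp hM hy hy1]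
  have hxI := (hcp.isLeast_minInters hM hx).1.1
  have hyI := (hcp.isLeast_minInters hM hy).1.1
  refine ⟨fun h => le_antisymm ?_ ?_, fun h => by rw [h]⟩
  · exact le_of_setOf_le_subset hyI (le_of_mem_inters hxI) h.ge
  · exact le_of_setOf_le_subset hxI (le_of_mem_inters hyI) h.le

theorem IsCPGroup.maxCyclicsContaining_one_mem_image_iff (hcp : IsCPGroup G) (hp : p.Prime)
    (hM : M ∈ maxCycP p G) :
    maxCyclicsContaining 1 ∈ maxCyclicsContaining '' ((M : Set G) \ {1}) ↔
      ¬ (ExistsMaxCyclicNotPGroup p G ∨ ⊥ ∈ inters p M) := by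
  rw [maxCyclicsContaining_one]
  constructor
  · rintro ⟨x, ⟨hx, hx1⟩, hxeq⟩
    rw [hcp.maxCyclicsContaining_eq hp hM hx hx1] at hxeq
    have hmem := fun N => (Set.ext_iff.mp hxeq N).mpr
    have hleast := hcp.isLeast_minInters hM hx
    rintro (⟨N, hN, hNp⟩ | ⟨N, hN, hbot⟩)
    · exact hNp (hmem N hN).1.2
    · have hle : minInters p M x ≤ M ⊓ N :=
        le_inf (le_of_mem_inters hleast.1.1) (hmem N hN.1).2
      exact hx1 (by simpa [← hbot] using hle hleast.1.2)
  · intro h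
    obtain ⟨hQ, hbot⟩ := not_or.mp h
    have hleast := hcp.isLeast_minInters hM (one_mem M)
    have : IsCyclic M := hM.1.1
    obtain ⟨g, hg⟩ := (minInters p M 1).isCyclic_iff_exists_zpowers_eq_top.mp
      (isCyclic_of_le (le_of_mem_inters hleast.1.1))
    have hg1 : g ≠ 1 := fun h1 => hbot <| by
      rw [← zpowers_one_eq_bot, ← h1, hg]
      exact hleast.1.1
    have hgM : g ∈ M := le_of_mem_inters hleast.1.1 (hg ▸ mem_zpowers g)
    refine ⟨g, ⟨hgM, hg1⟩, ?_⟩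
    rw [hcp.maxCyclicsContaining_eq hp hM hgM hg1,
      hcp.minInters_eq_zpowers hM (hg ▸ hleast.1.1), hg]
    ext N
    refine ⟨fun hN => hN.1.1, fun hN => ?_⟩
    have hNp : N ∈ maxCycP p G := ⟨hN, not_not.mp fun hNp => hQ ⟨N, hN, hNp⟩⟩
    exact ⟨hNp, (hleast.2 ⟨⟨N, hNp, rfl⟩, one_mem _⟩).trans inf_le_right⟩

open Classical in
theorem IsCPGroup.numClassesIn_eq (hcp : IsCPGroup G) (hp : p.Prime) (hM : M ∈ maxCycP p G) :
    numClassesIn M = (inters p M \ {⊥}).ncard +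
      if ExistsMaxCyclicNotPGroup p G ∨ ⊥ ∈ inters p M then 1 else 0 := by
  rw [hcp.numClassesIn_eq_ncard_image,
    ← Set.insert_sdiff_self_of_mem (SetLike.mem_coe.mpr M.one_mem), Set.image_insert_eq,
    ← hcp.ncard_image_maxCyclicsContaining_diff_one hp hM]
  split_ifs with h
  · exact Set.ncard_insert_of_notMem
      (fun h' => (hcp.maxCyclicsContaining_one_mem_image_iff hp hM).mp h' h) (Set.toFinite _)
  · rw [Set.insert_eq_of_mem ((hcp.maxCyclicsContaining_one_mem_image_iff hp hM).mpr h), add_zero]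

theorem IsCPGroup.card_le_zpow_lamInt_iff (hcp : IsCPGroup G) (hp : p.Prime) (hM : IsPGroup p M)
    {C : Subgroup G} : (Nat.card C : ℚ) ≤ (p : ℚ) ^ lamInt p M ↔
      ExistsMaxCyclicNotPGroup p G ∧ C = ⊥ := by
  rw [hcp.lamInt_eq hp hM]
  split_ifs with hQ
  · simp [hQ, ← card_le_one_iff_eq_bot]
  · have hlt : (p : ℚ)⁻¹ < Nat.card C := calc
      (p : ℚ)⁻¹ < 1 := inv_lt_one_of_one_lt₀ (by exact_mod_cast hp.one_lt)
      _ ≤ Nat.card C := by exact_mod_cast Nat.card_pos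
    simp [hQ, hlt]

open Classical in
theorem IsCPGroup.sPrimeNum_eq (hcp : IsCPGroup G) (hp : p.Prime) (hM : IsPGroup p M) :
    sPrimeNum p M = (if ExistsMaxCyclicNotPGroup p G ∧ ⊥ ∈ inters p M then 1 else 0) + 1 := by
  unfold sPrimeNum
  simp_rw [hcp.card_le_zpow_lamInt_iff hp hM]
  split_ifs with h
  · have hbot : {C | C ∈ inters p M ∧ ExistsMaxCyclicNotPGroup p G ∧ C = ⊥} = {⊥} :=
      Set.ext fun C => ⟨fun hC => hC.2.2, by rintro rfl; exact ⟨h.2, h.1, rfl⟩⟩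
    rw [hbot, Nat.card_coe_set_eq, Set.ncard_singleton]
  · have hempty : {C | C ∈ inters p M ∧ ExistsMaxCyclicNotPGroup p G ∧ C = ⊥} = ∅ :=
      Set.eq_empty_of_forall_notMem fun C ⟨hC, hQ, hCbot⟩ => h ⟨hQ, hCbot ▸ hC⟩
    rw [hempty, Nat.card_of_isEmpty]

theorem IsCPGroup.alphaTerm_eq_numClassesIn (hcp : IsCPGroup G) (hp : p.Prime)
    (hM : M ∈ maxCycP p G) : alphaTerm p M = numClassesIn M := by
  classical
  have hsNum : (sNum p M : ℤ) =
      (inters p M \ {⊥}).ncard + if ⊥ ∈ inters p M then 1 else 0 := by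
    rw [sNum, Nat.card_coe_set_eq]
    split_ifs with hb
    · exact_mod_cast (Set.ncard_sdiff_singleton_add_one hb (Set.toFinite _)).symm
    · rw [Set.sdiff_singleton_eq_self hb, add_zero]
  rw [alphaTerm, hsNum, hcp.sPrimeNum_eq hp hM.2, hcp.lamInt_eq hp hM.2, hcp.numClassesIn_eq hp hM]
  by_cases hQ : ExistsMaxCyclicNotPGroup p G <;>
    by_cases hb : ⊥ ∈ inters p M <;> simp [hQ, hb] <;> ring

end Intersections

section Alpha

variable {G : Type*} [Group G] [Finite G]

theorem IsCPGroup.exists_mem_maxCycP [Nontrivial G] (hcp : IsCPGroup G) {M : Subgroup G}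
    (hM : IsMaxCyclic M) : ∃ p, (p.Prime ∧ p ∣ Nat.card G) ∧ M ∈ maxCycP p G := by
  obtain ⟨p, hp, hMp⟩ := hcp.exists_isPGroup_of_isCyclic hM.1
  have : Fact p.Prime := ⟨hp⟩
  obtain ⟨n, hn, hcard⟩ := hMp.nontrivial_iff_card.mp (nontrivial_iff_ne_bot M |>.mpr hM.ne_bot)
  have hpM : p ∣ Nat.card M := hcard ▸ dvd_pow_self p hn.ne'
  exact ⟨p, ⟨hp, hpM.trans (card_subgroup_dvd_card M)⟩, hM, hMp⟩

theorem IsCPGroup.alphaTerm_le_cliqueNum (hcp : IsCPGroup G) {p : ℕ} (hp : p.Prime)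
    {M : Subgroup G} (hM : M ∈ maxCycP p G) :
    alphaTerm p M ≤ (powerGraph G).reduced.cliqueNum := by
  rw [hcp.alphaTerm_eq_numClassesIn hp hM]
  exact_mod_cast hcp.numClassesIn_le_cliqueNum hM.1

theorem IsCPGroup.alphaP_le_cliqueNum (hcp : IsCPGroup G) {p : ℕ} (hp : p.Prime) :
    alphaP p G ≤ (powerGraph G).reduced.cliqueNum := by
  rcases (alphaTerm p '' maxCycP p G).eq_empty_or_nonempty with h | h
  · rw [alphaP, h, Int.csSup_empty]
    exact Int.natCast_nonneg _
  · exact csSup_le h fun _ ⟨_, hM, hz⟩ => hz ▸ hcp.alphaTerm_le_cliqueNum hp hM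

theorem IsCPGroup.alphaP_eq_cliqueNum (hcp : IsCPGroup G) {p : ℕ} (hp : p.Prime)
    {M : Subgroup G} (hM : M ∈ maxCycP p G)
    (h : (powerGraph G).reduced.cliqueNum = numClassesIn M) :
    alphaP p G = (powerGraph G).reduced.cliqueNum :=
  IsGreatest.csSup_eq ⟨⟨M, hM, by rw [hcp.alphaTerm_eq_numClassesIn hp hM, h]⟩,
    fun _ ⟨_, hN, hz⟩ => hz ▸ hcp.alphaTerm_le_cliqueNum hp hN⟩

end Alpha

theorem stmt_9 {G : Type*} [Group G] [Finite G] (hnc : ¬ IsCyclic G)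
    (hcp : IsCPGroup G) :
    ((powerGraph G).reduced.cliqueNum : ℤ) =
      sSup ((fun p => alphaP p G) '' {p : ℕ | p.Prime ∧ p ∣ Nat.card G}) := by
  have : Nontrivial G := Nontrivial.of_not_isCyclic hnc
  obtain ⟨M, hM, hclique⟩ := hcp.exists_cliqueNum_eq_numClassesIn
  obtain ⟨p, hp, hMp⟩ := hcp.exists_mem_maxCycP hM
  symm
  refine IsGreatest.csSup_eq ⟨⟨p, hp, hcp.alphaP_eq_cliqueNum hp.1 hMp hclique⟩, ?_⟩
  rintro _ ⟨q, ⟨hq, -⟩, rfl⟩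
  exact hcp.alphaP_le_cliqueNum hq
end
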